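/- In the ℚ-algebra P = ℚ[a,b]/(a³ − 3ab, a²b − 2b², ab², b³), the images of the six monomials 1, a, b, a², ab, b² form a basis of P as a ℚ-vector space; in particular P has dimension 6 over ℚ. -/

import Mathlib

open MvPolynomial

noncomputable section

/-- The polynomial ring ℚ[a,b] (variables indexed by `Fin 2`, a = X 0, b = X 1). -/
abbrev PolyQQ : Type := MvPolynomial (Fin 2) ℚ

/-- The ideal (a³ − 3ab, a²b − 2b², ab², b³). -/
def symIdealP : Ideal PolyQQ :=
  Ideal.span {X 0 ^ 3 - 3 * (X 0 * X 1), X 0 ^ 2 * X 1 - 2 * X 1 ^ 2,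
    X 0 * X 1 ^ 2, X 1 ^ 3}

/-- P = ℚ[a,b]/(a³ − 3ab, a²b − 2b², ab², b³). -/
abbrev PRing := PolyQQ ⧸ symIdealP

/-- The class of a in P. -/
def acl : PRing := Ideal.Quotient.mk symIdealP (X 0)

/-- The class of b in P. -/
def bcl : PRing := Ideal.Quotient.mk symIdealP (X 1)

/-- The six monomials 1, a, b, a², ab, b². -/
def monos : Fin 6 → PRing := ![1, acl, bcl, acl ^ 2, acl * bcl, bcl ^ 2]

/-! ### Auxiliary normal-form machinery -/

/-- Normal form of the monomial a^i b^j as a coordinate vector w.r.t.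
1, a, b, a², ab, b². -/
def w : ℕ → ℕ → (Fin 6 → ℚ)
  | 0, 0 => ![1,0,0,0,0,0]
  | 1, 0 => ![0,1,0,0,0,0]
  | 0, 1 => ![0,0,1,0,0,0]
  | 2, 0 => ![0,0,0,1,0,0]
  | 1, 1 => ![0,0,0,0,1,0]
  | 3, 0 => ![0,0,0,0,3,0]
  | 0, 2 => ![0,0,0,0,0,1]
  | 2, 1 => ![0,0,0,0,0,2]
  | 4, 0 => ![0,0,0,0,0,6]
  | _, _ => 0

def vv : (Fin 2 →₀ ℕ) → (Fin 6 → ℚ) := fun m => w (m 0) (m 1)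

/-- The normal-form linear map. -/
def N : PolyQQ →ₗ[ℚ] (Fin 6 → ℚ) :=
  Finsupp.linearCombination ℚ vv ∘ₗ (AddMonoidAlgebra.coeffLinearEquiv ℚ).toLinearMap

lemma N_monomial (m : Fin 2 →₀ ℕ) (c : ℚ) : N (monomial m c) = c • vv m := by
  show Finsupp.linearCombination ℚ vv (Finsupp.single m c) = c • vv m
  rw [Finsupp.linearCombination_single]

lemma hw1 (i j : ℕ) : w (i+3) j = (3:ℚ) • w (i+1) (j+1) := by
  match i, j with
  | 0, 0 => funext k; fin_cases k <;> norm_num [w]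
  | 1, 0 => funext k; fin_cases k <;> norm_num [w]
  | (n+2), 0 => simp [w]
  | 0, (m+1) => simp [w]
  | (n+1), (m+1) => simp [w]

lemma hw2 (i j : ℕ) : w (i+2) (j+1) = (2:ℚ) • w i (j+2) := by
  match i, j with
  | 0, 0 => funext k; fin_cases k <;> norm_num [w]
  | (n+1), 0 => simp [w]
  | 0, (m+1) => simp [w]
  | (n+1), (m+1) => simp [w]

lemma hw3 (i j : ℕ) : w (i+1) (j+2) = 0 := by
  match i, j with
  | 0, 0 => simp [w]
  | (n+1), 0 => simp [w]
  | 0, (m+1) => simp [w]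
  | (n+1), (m+1) => simp [w]

lemma hw4 (i j : ℕ) : w i (j+3) = 0 := by
  match i, j with
  | 0, 0 => simp [w]
  | (n+1), 0 => simp [w]
  | 0, (m+1) => simp [w]
  | (n+1), (m+1) => simp [w]

lemma hx (s : Fin 2) : (X s : PolyQQ) = monomial (Finsupp.single s 1) 1 := rfl

lemma hC3 : (3 : PolyQQ) = C (3:ℚ) := (map_ofNat C 3).symm
lemma hC2 : (2 : PolyQQ) = C (2:ℚ) := (map_ofNat C 2).symm

lemma Ngen1 (m : Fin 2 →₀ ℕ) (c : ℚ) :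
    N (monomial m c * (X 0 ^ 3 - 3 * (X 0 * X 1))) = 0 := by
  rw [mul_sub, X_pow_eq_monomial, hC3, hx, hx, monomial_mul, monomial_mul,
    C_mul_monomial, monomial_mul, map_sub, N_monomial, N_monomial]
  simp only [vv, Finsupp.add_apply, Finsupp.single_apply]
  norm_num
  rw [hw1 (m 0) (m 1)]
  module

lemma Ngen2 (m : Fin 2 →₀ ℕ) (c : ℚ) :
    N (monomial m c * (X 0 ^ 2 * X 1 - 2 * X 1 ^ 2)) = 0 := by
  rw [mul_sub, X_pow_eq_monomial, X_pow_eq_monomial, hC2, hx, monomial_mul,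
    monomial_mul, C_mul_monomial, monomial_mul, map_sub, N_monomial, N_monomial]
  simp only [vv, Finsupp.add_apply, Finsupp.single_apply]
  norm_num
  rw [hw2 (m 0) (m 1)]
  module

lemma Ngen3 (m : Fin 2 →₀ ℕ) (c : ℚ) :
    N (monomial m c * (X 0 * X 1 ^ 2)) = 0 := by
  rw [X_pow_eq_monomial, hx, monomial_mul, monomial_mul, N_monomial]
  simp only [vv, Finsupp.add_apply, Finsupp.single_apply]
  norm_num [hw3 (m 0) (m 1)]

lemma Ngen4 (m : Fin 2 →₀ ℕ) (c : ℚ) :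
    N (monomial m c * (X 1 ^ 3)) = 0 := by
  rw [X_pow_eq_monomial, monomial_mul, N_monomial]
  simp only [vv, Finsupp.add_apply, Finsupp.single_apply]
  norm_num [hw4 (m 0) (m 1)]

lemma N_mul_gen (g : PolyQQ)
    (hg : g ∈ ({X 0 ^ 3 - 3 * (X 0 * X 1), X 0 ^ 2 * X 1 - 2 * X 1 ^ 2,
      X 0 * X 1 ^ 2, X 1 ^ 3} : Set PolyQQ)) (r : PolyQQ) :
    N (r * g) = 0 := by
  induction r using MvPolynomial.induction_on' with
  | monomial m c =>
    rcases hg with rfl | rfl | rfl | rfl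
    · exact Ngen1 m c
    · exact Ngen2 m c
    · exact Ngen3 m c
    · exact Ngen4 m c
  | add p q hp hq =>
    rw [add_mul, map_add, hp, hq, add_zero]

lemma N_ideal {p : PolyQQ} (hp : p ∈ symIdealP) : N p = 0 := by
  have key : ∀ r : PolyQQ, N (r * p) = 0 := by
    refine Submodule.span_induction (p := fun x _ => ∀ r : PolyQQ, N (r * x) = 0)
      (fun x hx r => N_mul_gen x hx r) (by simp) ?_ ?_ hp
    · intro x y _ _ hx hy r
      rw [mul_add, map_add, hx, hy, add_zero]
    · intro a x _ hx r
      rw [smul_eq_mul, ← mul_assoc]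
      exact hx (r * a)
  simpa using key 1

/-- Preimages of the six monomials. -/

def pre : Fin 6 → PolyQQ := ![1, X 0, X 1, X 0 ^ 2, X 0 * X 1, X 1 ^ 2]

lemma Npre0 : N (pre 0) = ![1,0,0,0,0,0] := by
  rw [show pre 0 = monomial 0 1 from rfl, N_monomial, one_smul]
  show w ((0 : Fin 2 →₀ ℕ) 0) ((0 : Fin 2 →₀ ℕ) 1) = _
  norm_num [w]

lemma Npre1 : N (pre 1) = ![0,1,0,0,0,0] := by
  rw [show pre 1 = monomial (Finsupp.single 0 1) 1 from rfl, N_monomial, one_smul]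
  show w ((Finsupp.single (0:Fin 2) 1) 0) ((Finsupp.single (0:Fin 2) 1) 1) = _
  norm_num [Finsupp.single_apply, w]

lemma Npre2 : N (pre 2) = ![0,0,1,0,0,0] := by
  rw [show pre 2 = monomial (Finsupp.single 1 1) 1 from rfl, N_monomial, one_smul]
  show w ((Finsupp.single (1:Fin 2) 1) 0) ((Finsupp.single (1:Fin 2) 1) 1) = _
  norm_num [Finsupp.single_apply, w]

lemma Npre3 : N (pre 3) = ![0,0,0,1,0,0] := by
  have h : pre 3 = monomial (Finsupp.single 0 2) 1 := X_pow_eq_monomial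
  rw [h, N_monomial, one_smul]
  show w ((Finsupp.single (0:Fin 2) 2) 0) ((Finsupp.single (0:Fin 2) 2) 1) = _
  norm_num [Finsupp.single_apply, w]

lemma Npre4 : N (pre 4) = ![0,0,0,0,1,0] := by
  have h : pre 4 = monomial (Finsupp.single 0 1 + Finsupp.single 1 1) 1 := by
    rw [show pre 4 = X 0 * X 1 from rfl, hx, hx, monomial_mul, one_mul]
  rw [h, N_monomial, one_smul]
  simp only [vv, Finsupp.add_apply, Finsupp.single_apply]
  norm_num [w]

lemma Npre5 : N (pre 5) = ![0,0,0,0,0,1] := by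
  have h : pre 5 = monomial (Finsupp.single 1 2) 1 := X_pow_eq_monomial
  rw [h, N_monomial, one_smul]
  show w ((Finsupp.single (1:Fin 2) 2) 0) ((Finsupp.single (1:Fin 2) 2) 1) = _
  norm_num [Finsupp.single_apply, w]

lemma mk_pre (i : Fin 6) : Ideal.Quotient.mk symIdealP (pre i) = monos i := by
  fin_cases i
  · rfl
  · rfl
  · rfl
  · show Ideal.Quotient.mk symIdealP (X 0 ^ 2) = acl ^ 2
    rw [map_pow]; rfl
  · show Ideal.Quotient.mk symIdealP (X 0 * X 1) = acl * bcl
    rw [map_mul]; rfl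
  · show Ideal.Quotient.mk symIdealP (X 1 ^ 2) = bcl ^ 2
    rw [map_pow]; rfl

lemma mem1 : X 0 ^ 3 - 3 * (X 0 * X 1) ∈ symIdealP :=
  Ideal.subset_span (Set.mem_insert _ _)
lemma mem2 : X 0 ^ 2 * X 1 - 2 * X 1 ^ 2 ∈ symIdealP :=
  Ideal.subset_span (Set.mem_insert_of_mem _ (Set.mem_insert _ _))
lemma mem3 : X 0 * X 1 ^ 2 ∈ symIdealP :=
  Ideal.subset_span (Set.mem_insert_of_mem _ (Set.mem_insert_of_mem _ (Set.mem_insert _ _)))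
lemma mem4 : X 1 ^ 3 ∈ symIdealP :=
  Ideal.subset_span (Set.mem_insert_of_mem _ (Set.mem_insert_of_mem _
    (Set.mem_insert_of_mem _ rfl)))

lemma rel1 : acl ^ 3 = 3 * (acl * bcl) := by
  rw [acl, bcl, ← map_pow, ← map_mul, ← map_ofNat (Ideal.Quotient.mk symIdealP) 3, ← map_mul]
  exact Ideal.Quotient.eq.mpr mem1

lemma rel2 : acl ^ 2 * bcl = 2 * bcl ^ 2 := by
  rw [acl, bcl, ← map_pow, ← map_mul, ← map_pow,
    ← map_ofNat (Ideal.Quotient.mk symIdealP) 2, ← map_mul]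
  exact Ideal.Quotient.eq.mpr mem2

lemma rel3 : acl * bcl ^ 2 = 0 := by
  rw [acl, bcl, ← map_pow, ← map_mul]
  exact Ideal.Quotient.eq_zero_iff_mem.mpr mem3

lemma rel4 : bcl ^ 3 = 0 := by
  rw [bcl, ← map_pow]
  exact Ideal.Quotient.eq_zero_iff_mem.mpr mem4

lemma monos_mem (i : Fin 6) : monos i ∈ Submodule.span ℚ (Set.range monos) :=
  Submodule.subset_span ⟨i, rfl⟩

lemma span_mul_acl {x : PRing} (hx : x ∈ Submodule.span ℚ (Set.range monos)) :
    x * acl ∈ Submodule.span ℚ (Set.range monos) := by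
  refine Submodule.span_induction (p := fun y _ => y * acl ∈ Submodule.span ℚ (Set.range monos))
    ?_ (by show (0:PRing) * acl ∈ _; rw [zero_mul]; exact zero_mem _) ?_ ?_ hx
  · rintro y ⟨i, rfl⟩
    fin_cases i
    · show (1 : PRing) * acl ∈ _
      rw [one_mul]; exact monos_mem 1
    · show acl * acl ∈ _
      rw [show acl * acl = acl ^ 2 by ring]; exact monos_mem 3
    · show bcl * acl ∈ _
      rw [show bcl * acl = acl * bcl by ring]; exact monos_mem 4
    · show acl ^ 2 * acl ∈ _
      have h : acl ^ 2 * acl = acl * bcl + acl * bcl + acl * bcl := by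
        rw [show acl ^ 2 * acl = acl ^ 3 by ring, rel1]; ring
      rw [h]
      exact add_mem (add_mem (monos_mem 4) (monos_mem 4)) (monos_mem 4)
    · show acl * bcl * acl ∈ _
      have h : acl * bcl * acl = bcl ^ 2 + bcl ^ 2 := by
        rw [show acl * bcl * acl = acl ^ 2 * bcl by ring, rel2]; ring
      rw [h]
      exact add_mem (monos_mem 5) (monos_mem 5)
    · show bcl ^ 2 * acl ∈ _
      have h : bcl ^ 2 * acl = 0 := by
        rw [show bcl ^ 2 * acl = acl * bcl ^ 2 by ring, rel3]
      rw [h]; exact zero_mem _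
  · intro y z _ _ hy hz
    rw [add_mul]; exact add_mem hy hz
  · intro a y _ hy
    show (a • y) * acl ∈ _
    rw [smul_mul_assoc]; exact Submodule.smul_mem _ _ hy

lemma span_mul_bcl {x : PRing} (hx : x ∈ Submodule.span ℚ (Set.range monos)) :
    x * bcl ∈ Submodule.span ℚ (Set.range monos) := by
  refine Submodule.span_induction (p := fun y _ => y * bcl ∈ Submodule.span ℚ (Set.range monos))
    ?_ (by show (0:PRing) * bcl ∈ _; rw [zero_mul]; exact zero_mem _) ?_ ?_ hx
  · rintro y ⟨i, rfl⟩
    fin_cases i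
    · show (1 : PRing) * bcl ∈ _
      rw [one_mul]; exact monos_mem 2
    · show acl * bcl ∈ _
      exact monos_mem 4
    · show bcl * bcl ∈ _
      rw [show bcl * bcl = bcl ^ 2 by ring]; exact monos_mem 5
    · show acl ^ 2 * bcl ∈ _
      have h : acl ^ 2 * bcl = bcl ^ 2 + bcl ^ 2 := by rw [rel2]; ring
      rw [h]
      exact add_mem (monos_mem 5) (monos_mem 5)
    · show acl * bcl * bcl ∈ _
      have h : acl * bcl * bcl = 0 := by
        rw [show acl * bcl * bcl = acl * bcl ^ 2 by ring, rel3]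
      rw [h]; exact zero_mem _
    · show bcl ^ 2 * bcl ∈ _
      have h : bcl ^ 2 * bcl = 0 := by
        rw [show bcl ^ 2 * bcl = bcl ^ 3 by ring, rel4]
      rw [h]; exact zero_mem _
  · intro y z _ _ hy hz
    rw [add_mul]; exact add_mem hy hz
  · intro a y _ hy
    show (a • y) * bcl ∈ _
    rw [smul_mul_assoc]; exact Submodule.smul_mem _ _ hy

lemma span_top : Submodule.span ℚ (Set.range monos) = (⊤ : Submodule ℚ PRing) := by
  rw [eq_top_iff]
  rintro x -
  obtain ⟨p, rfl⟩ := Ideal.Quotient.mk_surjective x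
  induction p using MvPolynomial.induction_on with
  | C c =>
    rw [show Ideal.Quotient.mk symIdealP (C c) = algebraMap ℚ PRing c from rfl,
      Algebra.algebraMap_eq_smul_one]
    exact Submodule.smul_mem _ _ (monos_mem 0)
  | add p q hp hq =>
    rw [map_add]; exact add_mem hp hq
  | mul_X p i hp =>
    rw [map_mul]
    fin_cases i
    · exact span_mul_acl hp
    · exact span_mul_bcl hp

lemma mk_smul (c : ℚ) (p : PolyQQ) :
    Ideal.Quotient.mk symIdealP (c • p) = c • Ideal.Quotient.mk symIdealP p :=
  map_smul (Ideal.Quotient.mkₐ ℚ symIdealP) c p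

lemma monos_li : LinearIndependent ℚ monos := by
  rw [Fintype.linearIndependent_iff]
  intro c hc i
  set q : PolyQQ := ∑ j, c j • pre j with hq
  have hmk : Ideal.Quotient.mk symIdealP q = 0 := by
    have h : Ideal.Quotient.mk symIdealP q = ∑ j, c j • monos j := by
      rw [hq, map_sum]
      exact Finset.sum_congr rfl fun j _ => by rw [mk_smul, mk_pre]
    rw [h, hc]
  have hNq : N q = 0 := N_ideal (Ideal.Quotient.eq_zero_iff_mem.mp hmk)
  have hNq' : N q = ![c 0, c 1, c 2, c 3, c 4, c 5] := by
    rw [hq, map_sum]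
    simp only [map_smul]
    rw [Fin.sum_univ_six, Npre0, Npre1, Npre2, Npre3, Npre4, Npre5]
    funext k
    fin_cases k
    · simp
    · simp
    · simp
    · simp
    · simp
    · show c 0 * 0 + c 1 * 0 + c 2 * 0 + c 3 * 0 + c 4 * 0 + c 5 * 1 = c 5
      ring
  rw [hNq] at hNq'
  have h0 := congrFun hNq'.symm
  fin_cases i
  · exact h0 0
  · exact h0 1
  · exact h0 2
  · exact h0 3
  · exact h0 4
  · exact h0 5

/-- The images of 1, a, b, a², ab, b² form a ℚ-basis of P; in particular
P is 6-dimensional over ℚ. -/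
theorem sym2P2_chow_ring_basis :
    LinearIndependent ℚ monos ∧
    Submodule.span ℚ (Set.range monos) = (⊤ : Submodule ℚ PRing) ∧
    Module.finrank ℚ PRing = 6 := by
  refine ⟨monos_li, span_top, ?_⟩
  have b : Module.Basis (Fin 6) ℚ PRing := Module.Basis.mk monos_li (by rw [span_top])
  rw [Module.finrank_eq_card_basis b]
  simp
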